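/- arXiv:1304.5330 — 4 statements merged into one kernel-verified Lean document; each statement's English description precedes it below -/
import Mathlib

section
/- In a unit disk graph (vertices are points in the plane, two vertices adjacent iff their Euclidean distance is at most 1), any vertex is adjacent to at most 5 vertices of any independent set. -/
/-!
Two neighbours `v ≠ w` of `u` that are more than `1` apart subtend an angle larger than `π / 3`
at `u`: otherwise the law of cosines gives `‖v - w‖ ≤ max ‖v - u‖ ‖w - u‖ ≤ 1`. Hence the
oriented directions of the neighbours, seen from `u`, are pairwise more than `2π / 6` apart on the
circle of angles, and a circle of length `2π` has room for at most five such points.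
-/

open Real InnerProductGeometry Module

theorem InnerProductGeometry.pi_div_three_lt_angle_of_max_norm_lt_norm_sub
    {V : Type*} [NormedAddCommGroup V] [InnerProductSpace ℝ V] {x y : V}
    (h : max ‖x‖ ‖y‖ < ‖x - y‖) : π / 3 < angle x y := by
  by_contra! hle
  have hcos : 1 / 2 ≤ cos (angle x y) := by
    rw [← cos_pi_div_three]
    exact cos_le_cos_of_nonneg_of_le_pi (angle_nonneg x y) (by linarith [pi_pos]) hle
  have hx := le_max_left ‖x‖ ‖y‖
  have hy := le_max_right ‖x‖ ‖y‖
  have hlaw := norm_sub_sq_eq_norm_sq_add_norm_sq_sub_two_mul_norm_mul_norm_mul_cos_angle x y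
  nlinarith [norm_nonneg x, norm_nonneg y, mul_nonneg (norm_nonneg x) (norm_nonneg y),
    mul_le_mul_of_nonneg_left hcos (mul_nonneg (norm_nonneg x) (norm_nonneg y))]

theorem AddCircle.dist_coe_le (p x y : ℝ) : dist (x : AddCircle p) y ≤ dist x y := by
  rw [dist_eq_norm, dist_eq_norm, ← coe_sub]
  exact QuotientAddGroup.norm_mk_le_norm

theorem Nat.abs_sub_lt_of_floor_div_eq {a b d : ℝ} (ha : 0 ≤ a) (hb : 0 ≤ b) (hd : 0 < d)
    (h : ⌊a / d⌋₊ = ⌊b / d⌋₊) : |a - b| < d := by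
  have hfloor : (⌊a / d⌋₊ : ℝ) = ⌊b / d⌋₊ := congrArg Nat.cast h
  have ha₁ := Nat.floor_le (div_nonneg ha hd.le)
  have ha₂ := Nat.lt_floor_add_one (a / d)
  have hb₁ := Nat.floor_le (div_nonneg hb hd.le)
  have hb₂ := Nat.lt_floor_add_one (b / d)
  have h₁ : |a / d - b / d| < 1 := by
    rw [abs_lt]; constructor <;> linarith
  rwa [← sub_div, abs_div, abs_of_pos hd, div_lt_one hd] at h₁

theorem AddCircle.card_lt_of_pairwise_lt_dist {p : ℝ} (hp : 0 < p) {n : ℕ} (hn : 2 ≤ n)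
    (s : Finset (AddCircle p)) (hs : (s : Set (AddCircle p)).Pairwise fun a b => p / n < dist a b) :
    s.card < n := by
  rcases s.eq_empty_or_nonempty with rfl | ⟨a₀, ha₀⟩
  · simp only [Finset.card_empty]; omega
  have : Fact (0 < p) := ⟨hp⟩
  have hd : 0 < p / n := div_pos hp (by positivity)
  -- `x b ∈ [0, p)` is the arc length from `a₀` to `b`. Cut the circle into `n` arcs of length
  -- `p / n`: each holds at most one point of `s`, and the last one only points near `a₀`.
  set x : AddCircle p → ℝ := fun b => equivIco p 0 (b - a₀)
  have hx_mem (b) : 0 ≤ x b ∧ x b < p := by simpa using (equivIco p 0 (b - a₀)).2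
  have hx_coe (b) : (x b : AddCircle p) = b - a₀ := coe_equivIco
  have hx₀ : x a₀ = 0 := by
    simp only [x, sub_self, ← coe_zero, equivIco_coe_of_mem (show (0 : ℝ) ∈ Set.Ico 0 (0 + p)
      by simp [hp])]
  have hdist (b c) : dist b c ≤ |x b - x c| := by
    rw [← dist_sub_right b c a₀, ← hx_coe, ← hx_coe, ← Real.dist_eq]
    exact dist_coe_le p _ _
  have hdist₀ (b) : dist b a₀ ≤ p - x b := by
    rw [← dist_sub_right b a₀ a₀, sub_self, ← hx_coe, ← coe_period]
    calc _ ≤ dist (x b) p := dist_coe_le p _ _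
      _ = p - x b := by rw [Real.dist_eq, abs_sub_comm, abs_of_nonneg (by linarith [hx_mem b])]
  set sector : AddCircle p → ℕ := fun b => ⌊x b / (p / n)⌋₊
  have hsector_lt : ∀ b ∈ s, sector b < n - 1 := by
    intro b hb
    by_contra! hge
    have hxb : p - p / n ≤ x b := by
      have h := (Nat.le_floor_iff (div_nonneg (hx_mem b).1 hd.le)).1 hge
      rwa [le_div_iff₀ hd, Nat.cast_sub (by omega), Nat.cast_one, sub_mul, one_mul,
        mul_div_cancel₀ _ (by positivity)] at h
    have hb₀ : b = a₀ := by
      by_contra hne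
      linarith [hs hb ha₀ hne, hdist₀ b]
    simp only [sector, hb₀, hx₀, zero_div, Nat.floor_zero] at hge
    omega
  have hinj : Set.InjOn sector s := by
    intro b hb c hc hbc
    by_contra hne
    linarith [hs hb hc hne, hdist b c,
      Nat.abs_sub_lt_of_floor_div_eq (hx_mem b).1 (hx_mem c).1 hd hbc]
  calc s.card ≤ (Finset.range (n - 1)).card :=
        Finset.card_le_card_of_injOn sector (fun b hb => Finset.mem_range.2 (hsector_lt b hb)) hinj
    _ < n := by simp only [Finset.card_range]; omega

theorem Real.Angle.norm_eq_abs_toReal (θ : Real.Angle) : ‖θ‖ = |θ.toReal| := by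
  conv_lhs => rw [← θ.coe_toReal]
  refine (AddCircle.norm_coe_eq_abs_iff _ two_pi_pos.ne').2 ?_
  rw [abs_of_pos two_pi_pos, mul_div_cancel_left₀ _ two_ne_zero]
  exact θ.abs_toReal_le_pi

section Plane

variable {V : Type*} [NormedAddCommGroup V] [InnerProductSpace ℝ V] [Fact (finrank ℝ V = 2)]

attribute [local instance] FiniteDimensional.of_fact_finrank_eq_two

theorem Orientation.dist_oangle_oangle (o : Orientation ℝ V (Fin 2)) {e x y : V}
    (he : e ≠ 0) (hx : x ≠ 0) (hy : y ≠ 0) :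
    dist (o.oangle e x) (o.oangle e y) = angle x y := by
  rw [dist_eq_norm, o.oangle_sub_left he hy hx, Real.Angle.norm_eq_abs_toReal,
    ← o.angle_eq_abs_oangle_toReal hy hx, angle_comm]

theorem EuclideanGeometry.card_le_five_of_subset_closedBall_of_pairwise_lt_dist
    {s : Finset V} {u : V} {r : ℝ} (hball : (s : Set V) ⊆ Metric.closedBall u r)
    (hsep : (s : Set V).Pairwise fun v w => r < dist v w) : s.card ≤ 5 := by
  let b := finBasisOfFinrankEq ℝ V (Fact.out : finrank ℝ V = 2)
  let o : Orientation ℝ V (Fin 2) := b.orientation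
  let θ : V → AddCircle (2 * π) := fun v => o.oangle (b 0) (v - u)
  have hθ : ∀ v ∈ s, ∀ w ∈ s, v ≠ w → π / 3 < dist (θ v) (θ w) := by
    intro v hv w hw hvw
    have h : max ‖v - u‖ ‖w - u‖ < ‖(v - u) - (w - u)‖ := by
      rw [sub_sub_sub_cancel_right, ← dist_eq_norm, ← dist_eq_norm, ← dist_eq_norm]
      exact max_lt_iff.2
        ⟨(hball hv).trans_lt (hsep hv hw hvw), (hball hw).trans_lt (hsep hv hw hvw)⟩
    have hv₀ : v - u ≠ 0 := by rintro h₀; simp [h₀, norm_sub_rev] at h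
    have hw₀ : w - u ≠ 0 := by rintro h₀; simp [h₀] at h
    calc π / 3 < InnerProductGeometry.angle (v - u) (w - u) :=
          pi_div_three_lt_angle_of_max_norm_lt_norm_sub h
      _ = dist (θ v) (θ w) := (o.dist_oangle_oangle (b.ne_zero 0) hv₀ hw₀).symm
  classical
  have hinj : Set.InjOn θ s := fun v hv w hw hvw => by
    by_contra hne
    linarith [hθ v hv w hw hne, dist_le_zero.2 hvw, pi_pos]
  rw [← Finset.card_image_of_injOn hinj, Nat.le_iff_lt_add_one]
  refine AddCircle.card_lt_of_pairwise_lt_dist two_pi_pos (by norm_num) _ ?_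
  rw [Finset.coe_image, hinj.pairwise_image]
  intro v hv w hw hvw
  have h6 : 2 * π / ((6 : ℕ) : ℝ) = π / 3 := by push_cast; ring
  rw [h6]
  exact hθ v hv w hw hvw

end Plane

theorem udg_vertex_adj_at_most_five_of_independent_general
    (I : Finset (EuclideanSpace ℝ (Fin 2)))
    (hind : ∀ x ∈ I, ∀ y ∈ I, x ≠ y → 1 < dist x y)
    (u : EuclideanSpace ℝ (Fin 2)) :
    (I.filter (fun v => v ≠ u ∧ dist u v ≤ 1)).card ≤ 5 := by
  have : Fact (finrank ℝ (EuclideanSpace ℝ (Fin 2)) = 2) := ⟨finrank_euclideanSpace_fin⟩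
  refine EuclideanGeometry.card_le_five_of_subset_closedBall_of_pairwise_lt_dist (u := u) (r := 1)
    (fun v hv => ?_) (fun v hv w hw hvw => ?_)
  · rw [Metric.mem_closedBall, dist_comm]
    exact (Finset.mem_filter.1 hv).2.2
  · exact hind v (Finset.mem_filter.1 hv).1 w (Finset.mem_filter.1 hw).1 hvw

/-- In a unit disk graph (vertices are points in the plane, adjacent iff
Euclidean distance ≤ 1), any vertex is adjacent to at most 5 vertices of any
independent set. -/
theorem udg_vertex_adj_at_most_five_of_independent
    (V I : Finset (EuclideanSpace ℝ (Fin 2))) (hIV : I ⊆ V)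
    (hind : ∀ x ∈ I, ∀ y ∈ I, x ≠ y → 1 < dist x y)
    (u : EuclideanSpace ℝ (Fin 2)) (hu : u ∈ V) :
    (I.filter (fun v => v ≠ u ∧ dist u v ≤ 1)).card ≤ 5 :=
  udg_vertex_adj_at_most_five_of_independent_general I hind u
end

section
/- If a finite set S of points in the plane has pairwise distances greater than 1 and all points of S lie within distance 1 of a common point c, then |S| ≤ 5. -/
/-!
Seen from `c`, two points of `S` are at most `1` away but more than `1` apart, so by the law of
cosines they subtend an angle whose cosine is below `1 / 2`. Measuring directions around `c` by
their argument in `(-π, π]`, six such directions would leave five consecutive gaps each larger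
than `π / 3`, so the first and last would be more than `5 * π / 3` and less than `2 * π` apart,
hence again at angle less than `π / 3`.
-/

open Real EuclideanGeometry

theorem cos_angle_lt_half_of_one_lt_dist {V P : Type*} [NormedAddCommGroup V]
    [InnerProductSpace ℝ V] [MetricSpace P] [NormedAddTorsor V P] {x y c : P}
    (hx : dist x c ≤ 1) (hy : dist y c ≤ 1) (hxy : 1 < dist x y) :
    cos (∠ x c y) < 1 / 2 := by
  have hlaw := law_cos x c y
  by_contra! hcos
  have hx0 := dist_nonneg (x := x) (y := c)
  have hy0 := dist_nonneg (x := y) (y := c)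
  -- `a ^ 2 + b ^ 2 - a * b ≤ 1` for `a, b ∈ [0, 1]`
  nlinarith [mul_nonneg (mul_nonneg hx0 hy0) (sub_nonneg.2 hcos),
    mul_nonneg (sub_nonneg.2 hx) (sub_nonneg.2 hy), mul_nonneg hx0 (sub_nonneg.2 hx),
    mul_nonneg hy0 (sub_nonneg.2 hy)]

theorem Complex.cos_angle_eq_cos_arg_sub {z w : ℂ} (hz : z ≠ 0) (hw : w ≠ 0) :
    Real.cos (InnerProductGeometry.angle z w) = Real.cos (z.arg - w.arg) := by
  rw [Complex.angle_eq_abs_arg hz hw, cos_abs, ← Real.Angle.cos_coe,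
    Complex.arg_div_coe_angle hz hw, ← Real.Angle.coe_sub, Real.Angle.cos_coe]

theorem half_le_cos_of_abs_le_pi_div_three {t : ℝ} (ht : |t| ≤ π / 3) : 1 / 2 ≤ cos t := by
  rw [← cos_abs, ← cos_pi_div_three]
  exact cos_le_cos_of_nonneg_of_le_pi (abs_nonneg t) (by linarith [pi_pos]) ht

theorem card_le_five_of_cos_sub_lt_half (T : Finset ℝ)
    (hcos : ∀ s ∈ T, ∀ t ∈ T, s ≠ t → cos (t - s) < 1 / 2)
    (hwidth : ∀ s ∈ T, ∀ t ∈ T, t - s < 2 * π) :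
    T.card ≤ 5 := by
  by_contra! hcard
  obtain ⟨T', hT', hcard'⟩ := Finset.exists_subset_card_eq hcard
  set g := T'.orderEmbOfFin hcard'
  have hmem (i : Fin 6) : g i ∈ T := hT' (T'.orderEmbOfFin_mem hcard' i)
  have hgap (i j : Fin 6) (hij : i < j) : π / 3 < g j - g i := by
    have hlt : g i < g j := g.strictMono hij
    by_contra! hle
    refine (hcos _ (hmem i) _ (hmem j) hlt.ne).not_ge (half_le_cos_of_abs_le_pi_div_three ?_)
    rwa [abs_of_pos (sub_pos.2 hlt)]
  have hspread : g 5 - g 0 ≤ 5 * π / 3 := by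
    by_contra! hgt
    have hw := hwidth _ (hmem 0) _ (hmem 5)
    refine (hcos _ (hmem 0) _ (hmem 5) (g.injective.ne (by decide))).not_ge ?_
    rw [← cos_sub_two_pi]
    exact half_le_cos_of_abs_le_pi_div_three (by rw [abs_of_neg (by linarith)]; linarith)
  linarith [hgap 0 1 (by decide), hgap 1 2 (by decide), hgap 2 3 (by decide),
    hgap 3 4 (by decide), hgap 4 5 (by decide)]

/-- A finite set of points in the plane with pairwise distances greater than 1,
all lying within distance 1 of a common point `c ∉ S`, has at most 5 elements. -/
theorem packing_unit_disk_at_most_five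
    (S : Finset (EuclideanSpace ℝ (Fin 2)))
    (c : EuclideanSpace ℝ (Fin 2)) (hc : c ∉ S)
    (hS : ∀ x ∈ S, ∀ y ∈ S, x ≠ y → 1 < dist x y)
    (hball : ∀ x ∈ S, dist x c ≤ 1) :
    S.card ≤ 5 := by
  let e : EuclideanSpace ℝ (Fin 2) ≃ₗᵢ[ℝ] ℂ := Complex.orthonormalBasisOneI.repr.symm
  let θ (x : EuclideanSpace ℝ (Fin 2)) : ℝ := (e (x - c)).arg
  have hθ : ∀ x ∈ S, ∀ y ∈ S, x ≠ y → cos (θ y - θ x) < 1 / 2 := by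
    intro x hx y hy hxy
    have hne {z} (hz : z ∈ S) : e (z - c) ≠ 0 := by
      simpa [sub_eq_zero] using ne_of_mem_of_not_mem hz hc
    have hangle : InnerProductGeometry.angle (e (y - c)) (e (x - c)) = ∠ y c x := by
      rw [EuclideanGeometry.angle, vsub_eq_sub, vsub_eq_sub]
      exact e.toLinearIsometry.angle_map _ _
    rw [← Complex.cos_angle_eq_cos_arg_sub (hne hy) (hne hx), hangle]
    exact cos_angle_lt_half_of_one_lt_dist (hball y hy) (hball x hx) (hS y hy x hx hxy.symm)
  have hθinj : Set.InjOn θ S := fun x hx y hy h => by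
    by_contra hxy
    have hlt := hθ x hx y hy hxy
    rw [h, sub_self, cos_zero] at hlt
    norm_num at hlt
  rw [← Finset.card_image_of_injOn hθinj]
  refine card_le_five_of_cos_sub_lt_half _ ?_ ?_
  · simp only [Finset.mem_image]
    rintro _ ⟨x, hx, rfl⟩ _ ⟨y, hy, rfl⟩ hxy
    exact hθ x hx y hy (ne_of_apply_ne θ hxy)
  · simp only [Finset.mem_image]
    rintro _ ⟨x, -, rfl⟩ _ ⟨y, -, rfl⟩
    linarith [Complex.neg_pi_lt_arg (e (x - c)), Complex.arg_le_pi (e (y - c))]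
end

section
/- Consider a shortest-path tree T rooted at s in a graph G, and an independent set M ⊆ L_i (vertices at depth i ≥ 2 in T, with respect to the unit disk graph G). Then any parent vertex u ∈ L_{i-1} is adjacent in G to at most 4 vertices of M. -/
/-!
The parent `w` of `u` lies in layer `i - 2`, so it is neither equal nor adjacent to any vertex of
`M`. Seen from `u`, the neighbours of `u` in `M` together with `w` are points of the closed unit
disk at mutual distance more than `1`, so by the law of cosines any two of them subtend an angle
greater than `π / 3` at `u`. Measuring directions from that of `w`, the neighbours lie in the two
open arcs `(π / 3, π]` and `(-π, -π / 3)`; cutting these into four arcs of length `π / 3`, no arc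
contains two of them.
-/

open scoped Classical

open InnerProductGeometry Real

theorem InnerProductGeometry.pi_div_three_lt_angle_of_one_lt_norm_sub
    {V : Type*} [NormedAddCommGroup V] [InnerProductSpace ℝ V] {x y : V}
    (hx : ‖x‖ ≤ 1) (hy : ‖y‖ ≤ 1) (hxy : 1 < ‖x - y‖) : π / 3 < angle x y := by
  by_contra! hangle
  have hcos : 1 / 2 ≤ Real.cos (angle x y) := by
    rw [← Real.cos_pi_div_three]
    exact Real.cos_le_cos_of_nonneg_of_le_pi (angle_nonneg x y) (by linarith [pi_pos]) hangle
  have hlaw := norm_sub_sq_eq_norm_sq_add_norm_sq_sub_two_mul_norm_mul_norm_mul_cos_angle x y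
  have hx0 := norm_nonneg x
  have hy0 := norm_nonneg y
  nlinarith [mul_nonneg hx0 hy0, mul_nonneg (mul_nonneg hx0 hy0) (sub_nonneg.2 hcos),
    mul_nonneg (sub_nonneg.2 hx) (sub_nonneg.2 hy), mul_nonneg hx0 (sub_nonneg.2 hx),
    mul_nonneg hy0 (sub_nonneg.2 hy)]

theorem Real.Angle.abs_toReal_coe_le_abs (θ : ℝ) : |(θ : Angle).toReal| ≤ |θ| := by
  rcases lt_or_ge |θ| π with hθ | hθ
  · rw [Angle.toReal_coe_eq_self_iff.2 ⟨by linarith [neg_abs_le θ], by linarith [le_abs_self θ]⟩]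
  · exact (Angle.abs_toReal_le_pi _).trans hθ

theorem Complex.angle_le_abs_arg_div_sub_arg_div {z w q : ℂ} (hz : z ≠ 0) (hw : w ≠ 0)
    (hq : q ≠ 0) : angle z w ≤ |(z / q).arg - (w / q).arg| := by
  have hcoe : ((z / w).arg : Angle) = ((z / q).arg - (w / q).arg : ℝ) := by
    rw [Angle.coe_sub, ← arg_div_coe_angle (div_ne_zero hz hq) (div_ne_zero hw hq),
      div_div_div_cancel_right₀ hq]
  rw [angle_eq_abs_arg hz hw, ← arg_coe_angle_toReal_eq_arg, hcoe]
  exact Angle.abs_toReal_coe_le_abs _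

theorem card_le_four_of_pi_div_three_lt_abs {ι : Type*} (s : Finset ι) (f : ι → ℝ)
    (hf : ∀ a ∈ s, f a ∈ Set.Ioc (-π) π) (hf0 : ∀ a ∈ s, π / 3 < |f a|)
    (hsep : ∀ a ∈ s, ∀ b ∈ s, a ≠ b → π / 3 ≤ |f a - f b|) : s.card ≤ 4 := by
  -- `⌊-f / (π / 3)⌋` cuts `[-π, π)` into six arcs of length `π / 3`; the two next to `0` are empty
  set x : ι → ℝ := fun a => -f a / (π / 3)
  have hπ : 0 < π / 3 := by positivity
  have hbin : ∀ a ∈ s, ⌊x a⌋ ∈ ({-3, -2, 1, 2} : Finset ℤ) := by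
    intro a ha
    obtain ⟨hlo, hhi⟩ := hf a ha
    have hlo' : -3 ≤ x a := by rw [le_div_iff₀ hπ]; linarith
    have hhi' : x a < 3 := by rw [div_lt_iff₀ hπ]; linarith
    have hfar : 1 < |x a| := by rw [abs_div, abs_neg, abs_of_pos hπ, one_lt_div hπ]; exact hf0 a ha
    have hge : -3 ≤ ⌊x a⌋ := Int.le_floor.2 (by exact_mod_cast hlo')
    have hlt : ⌊x a⌋ < 3 := Int.floor_lt.2 (by exact_mod_cast hhi')
    have hmid : 1 ≤ ⌊x a⌋ ∨ ⌊x a⌋ < -1 := by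
      rcases lt_abs.1 hfar with h | h
      · exact Or.inl (Int.le_floor.2 (by exact_mod_cast h.le))
      · exact Or.inr (Int.floor_lt.2 (by push_cast; linarith))
    simp only [Finset.mem_insert, Finset.mem_singleton]
    omega
  have hinj : Set.InjOn (fun a => ⌊x a⌋) s := by
    intro a ha b hb hab
    by_contra hne
    have hclose := Int.abs_sub_lt_one_of_floor_eq_floor hab
    have : x a - x b = -(f a - f b) / (π / 3) := by simp only [x]; ring
    rw [this, abs_div, abs_neg, abs_of_pos hπ, div_lt_one hπ] at hclose
    exact (hsep a ha b hb hne).not_gt hclose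
  calc s.card ≤ ({-3, -2, 1, 2} : Finset ℤ).card := Finset.card_le_card_of_injOn _ hbin hinj
    _ = 4 := rfl

theorem Complex.card_le_four_of_one_lt_norm_sub {ι : Type*} (s : Finset ι) (p : ι → ℂ) {q : ℂ}
    (hq : ‖q‖ ≤ 1) (hp : ∀ a ∈ s, ‖p a‖ ≤ 1) (hpq : ∀ a ∈ s, 1 < ‖p a - q‖)
    (hsep : ∀ a ∈ s, ∀ b ∈ s, a ≠ b → 1 < ‖p a - p b‖) : s.card ≤ 4 := by
  have hp0 : ∀ a ∈ s, p a ≠ 0 := by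
    intro a ha h0
    have := hpq a ha
    rw [h0, zero_sub, norm_neg] at this
    linarith
  rcases eq_or_ne q 0 with rfl | hq0
  · suffices s = ∅ by simp [this]
    refine Finset.eq_empty_of_forall_notMem fun a ha => ?_
    have := hpq a ha
    rw [sub_zero] at this
    linarith [hp a ha]
  refine card_le_four_of_pi_div_three_lt_abs s (fun a => (p a / q).arg)
    (fun a _ => arg_mem_Ioc _) (fun a ha => ?_) (fun a ha b hb hab => ?_)
  · rw [← angle_eq_abs_arg (hp0 a ha) hq0]
    exact pi_div_three_lt_angle_of_one_lt_norm_sub (hp a ha) hq (hpq a ha)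
  · calc π / 3 ≤ angle (p a) (p b) :=
          (pi_div_three_lt_angle_of_one_lt_norm_sub (hp a ha) (hp b hb) (hsep a ha b hb hab)).le
      _ ≤ _ := angle_le_abs_arg_div_sub_arg_div (hp0 a ha) (hp0 b hb) hq0

theorem EuclideanSpace.card_le_four_of_one_lt_dist {ι : Type*} (s : Finset ι)
    (p : ι → EuclideanSpace ℝ (Fin 2)) {c q : EuclideanSpace ℝ (Fin 2)}
    (hq : dist q c ≤ 1) (hp : ∀ a ∈ s, dist (p a) c ≤ 1) (hpq : ∀ a ∈ s, 1 < dist (p a) q)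
    (hsep : ∀ a ∈ s, ∀ b ∈ s, a ≠ b → 1 < dist (p a) (p b)) : s.card ≤ 4 := by
  set e := Complex.orthonormalBasisOneI.repr.symm
  have he : ∀ x y, ‖e (x - c) - e (y - c)‖ = dist x y := fun x y => by
    rw [← map_sub, sub_sub_sub_cancel_right, e.norm_map, dist_eq_norm]
  refine Complex.card_le_four_of_one_lt_norm_sub s (fun a => e (p a - c)) (q := e (q - c))
    ?_ ?_ ?_ ?_
  all_goals simp only [e.norm_map, ← dist_eq_norm, he]
  exacts [hq, hp, hpq, hsep]

theorem SimpleGraph.exists_adj_dist_add_one_eq {V : Type*} {G : SimpleGraph V} {s u : V}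
    (h : G.dist s u ≠ 0) : ∃ w, G.Adj u w ∧ G.dist s w + 1 = G.dist s u := by
  obtain ⟨p, hp⟩ := exists_walk_of_dist_ne_zero h
  cases hrev : p.reverse with
  | nil => exact absurd rfl (dist_ne_zero_iff_ne_and_reachable.1 h).1
  | cons hadj q =>
    refine ⟨_, hadj, ?_⟩
    have hlen : q.length + 1 = G.dist s u := by
      rw [← hp, ← p.length_reverse, hrev, Walk.length_cons]
    have hq : G.dist s _ ≤ q.length := dist_comm.trans_le (dist_le q)
    have := hadj.diff_dist_adj (u := s)
    omega

theorem udg_spt_parent_adj_at_most_four_general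
    {V : Type*} (pos : V → EuclideanSpace ℝ (Fin 2))
    (G : SimpleGraph V)
    (hG : ∀ u v : V, G.Adj u v ↔ u ≠ v ∧ dist (pos u) (pos v) ≤ 1)
    (s : V) (i : ℕ) (hi : 2 ≤ i)
    (M : Finset V) (hM : ∀ v ∈ M, G.dist s v = i)
    (hind : ∀ x ∈ M, ∀ y ∈ M, ¬ G.Adj x y)
    (u : V) (hu : G.dist s u = i - 1) :
    (M.filter (fun v => G.Adj u v)).card ≤ 4 := by
  obtain ⟨w, huw, hw⟩ := SimpleGraph.exists_adj_dist_add_one_eq (G := G) (s := s) (u := u)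
    (by omega)
  have hsep (x y : V) (hxy : x ≠ y) (hnadj : ¬ G.Adj x y) : 1 < dist (pos x) (pos y) :=
    lt_of_not_ge fun hle => hnadj ((hG x y).2 ⟨hxy, hle⟩)
  have hdist_le (v : V) (hv : G.Adj u v) : dist (pos v) (pos u) ≤ 1 :=
    dist_comm (pos u) (pos v) ▸ ((hG u v).1 hv).2
  refine EuclideanSpace.card_le_four_of_one_lt_dist _ pos (hdist_le w huw)
    (fun v hv => hdist_le v (Finset.mem_filter.1 hv).2) (fun v hv => ?_)
    fun x hx y hy hxy =>
      hsep x y hxy (hind x (Finset.mem_filter.1 hx).1 y (Finset.mem_filter.1 hy).1)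
  have hv := hM v (Finset.mem_filter.1 hv).1
  refine hsep v w (by rintro rfl; omega) fun hvw => ?_
  have := hvw.diff_dist_adj (u := s)
  omega

/-- In a unit disk graph `G` with BFS/shortest-path layers from a source `s`
(`L_j` = vertices at graph distance `j` from `s`), if `M` is an independent set
contained in layer `i` (with `i ≥ 2`), then any vertex `u` in layer `i - 1` is
adjacent in `G` to at most 4 vertices of `M`. -/
theorem udg_spt_parent_adj_at_most_four
    {V : Type*} [Fintype V] (pos : V → EuclideanSpace ℝ (Fin 2))
    (hpos : Function.Injective pos)
    (G : SimpleGraph V)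
    (hG : ∀ u v : V, G.Adj u v ↔ u ≠ v ∧ dist (pos u) (pos v) ≤ 1)
    (s : V) (i : ℕ) (hi : 2 ≤ i)
    (M : Finset V) (hM : ∀ v ∈ M, G.dist s v = i)
    (hind : ∀ x ∈ M, ∀ y ∈ M, ¬ G.Adj x y)
    (u : V) (hu : G.dist s u = i - 1) :
    (M.filter (fun v => G.Adj u v)).card ≤ 4 :=
  udg_spt_parent_adj_at_most_four_general pos G hG s i hi M hM hind u hu
end

section
/- In a greedy scheduling where each of m jobs must be assigned a distinct time slot avoiding a forbidden set of size at most f, and each job's earliest allowed slot is at most r, every job receives a slot at most r + f + 1; consequently, if each vertex u in an independent set M of a unit disk graph receives its message by time t and must avoid slots occupied by the at most 19 other members of M within distance 2, all of M can transmit collision-free by time t + 20. -/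
/-- Greedy slot selection: if a job's release time `r` is at most `t` and it picks
the minimal slot greater than `r` avoiding a forbidden set `F` of size at most 19,
then the chosen slot is at most `t + 20`. Applied to every job `j` in a sequence,
all jobs are scheduled by time `t + 20`. -/
theorem greedy_slot_le_of_forbidden_card_le
    {ι : Type*} (t : ℕ) (r : ι → ℕ) (F : ι → Finset ℕ)
    (hr : ∀ j, r j ≤ t) (hF : ∀ j, (F j).card ≤ 19) :
    ∀ j : ι, sInf {m : ℕ | r j < m ∧ m ∉ F j} ≤ t + 20 := by
  intro j
  have hcard : (F j).card < (Finset.Ioc (r j) (r j + 20)).card := by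
    rw [Nat.card_Ioc]; have := hF j; omega
  obtain ⟨m, hm, hmF⟩ : ∃ m ∈ Finset.Ioc (r j) (r j + 20), m ∉ F j := by
    by_contra h
    push_neg at h
    exact absurd (Finset.card_le_card h) (not_le.mpr hcard)
  rw [Finset.mem_Ioc] at hm
  calc sInf {m : ℕ | r j < m ∧ m ∉ F j} ≤ m := Nat.sInf_le ⟨hm.1, hmF⟩
    _ ≤ t + 20 := by have := hr j; omega
end
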